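/- arXiv:2103.07550 — 2 statements merged into one kernel-verified Lean document; each statement's English description precedes it below -/
import Mathlib

section
/- For every integer n ≥ 1, ∫₀¹ x · f_4^{(n)}(x) / (π·√(x·(1−x))) dx = 1/4, where f_4^{(n)} denotes the n-th iterate of f_4(x) = 4·x·(1−x). Hence the autocorrelation of the logistic map at r = 4 with respect to its invariant arcsine measure vanishes at every positive lag. -/
open Real MeasureTheory Set Function

/-! The substitution `x = (1 - cos φ) / 2` conjugates `f₄` to the doubling map `φ ↦ 2φ` and
carries `dφ / π` on `(0, π)` to the arcsine measure. The integral therefore becomes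
`(1 / 4π) ∫₀^π (1 - cos φ) (1 - cos 2ⁿφ) dφ`, and orthogonality of the cosines `cos kφ`
on `[0, π]` leaves only the constant term `π / 4π = 1/4`. -/

theorem logistic_iterate_one_sub_cos_div_two (n : ℕ) (φ : ℝ) :
    (fun y : ℝ => 4 * y * (1 - y))^[n] ((1 - cos φ) / 2) = (1 - cos (2 ^ n * φ)) / 2 := by
  have h : Semiconj (fun φ : ℝ => (1 - cos φ) / 2) (2 * ·) (fun y : ℝ => 4 * y * (1 - y)) := by
    intro φ
    simp only [cos_two_mul]
    ring
  simpa only [mul_left_iterate_apply] using (h.iterate_right n φ).symm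

theorem image_one_sub_cos_div_two_Ioo :
    (fun φ : ℝ => (1 - cos φ) / 2) '' Ioo 0 π = Ioo 0 1 := by
  ext x
  constructor
  · rintro ⟨φ, hφ, rfl⟩
    obtain ⟨h₁, h₂⟩ := mapsTo_cos_Ioo hφ
    constructor <;> linarith
  · rintro ⟨h₀, h₁⟩
    refine ⟨arccos (1 - 2 * x), ⟨arccos_pos.2 (by linarith), arccos_lt_pi.2 (by linarith)⟩, ?_⟩
    simp only
    rw [cos_arccos (by linarith) (by linarith)]
    ring

theorem injOn_one_sub_cos_div_two : InjOn (fun φ : ℝ => (1 - cos φ) / 2) (Ioo 0 π) := by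
  intro a ha b hb hab
  exact injOn_cos (Ioo_subset_Icc_self ha) (Ioo_subset_Icc_self hb) (by simp only at hab; linarith)

theorem sqrt_one_sub_cos_div_two_mul {φ : ℝ} (hφ : φ ∈ Ioo 0 π) :
    √((1 - cos φ) / 2 * (1 - (1 - cos φ) / 2)) = sin φ / 2 := by
  have hs : 0 ≤ sin φ := (sin_pos_of_mem_Ioo hφ).le
  rw [← sqrt_sq (by positivity : 0 ≤ sin φ / 2)]
  congr 1
  rw [div_pow, sin_sq]
  ring

theorem setIntegral_Ioo_div_sqrt_eq_integral_comp_one_sub_cos (g : ℝ → ℝ) :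
    ∫ x in Ioo 0 1, g x / √(x * (1 - x)) = ∫ φ in 0..π, g ((1 - cos φ) / 2) := by
  have hderiv : ∀ φ ∈ Ioo 0 π,
      HasDerivWithinAt (fun φ : ℝ => (1 - cos φ) / 2) (sin φ / 2) (Ioo 0 π) φ := fun φ _ => by
    simpa using (((hasDerivAt_cos φ).const_sub 1).div_const 2).hasDerivWithinAt
  rw [← image_one_sub_cos_div_two_Ioo,
    integral_image_eq_integral_abs_deriv_smul measurableSet_Ioo hderiv injOn_one_sub_cos_div_two,
    intervalIntegral.integral_of_le pi_pos.le, integral_Ioc_eq_integral_Ioo]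
  refine setIntegral_congr_fun measurableSet_Ioo fun φ hφ => ?_
  have hs : 0 < sin φ := sin_pos_of_mem_Ioo hφ
  rw [sqrt_one_sub_cos_div_two_mul hφ, abs_of_pos (by positivity), smul_eq_mul]
  field_simp

theorem integral_cos_int_mul {k : ℤ} (hk : k ≠ 0) : ∫ φ in 0..π, cos (k * φ) = 0 := by
  rw [intervalIntegral.integral_comp_mul_left cos (Int.cast_ne_zero.2 hk), integral_cos]
  simp [sin_int_mul_pi]

theorem integral_one_sub_cos_mul_one_sub_cos {m : ℕ} (hm : 2 ≤ m) :
    ∫ φ in 0..π, (1 - cos φ) * (1 - cos (m * φ)) = π := by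
  have hexpand : ∀ φ, (1 - cos φ) * (1 - cos (m * φ)) = 1 - cos ((1 : ℤ) * φ)
      - cos ((m : ℤ) * φ) + cos (((m + 1 : ℕ) : ℤ) * φ) / 2 + cos (((m - 1 : ℕ) : ℤ) * φ) / 2 := by
    intro φ
    push_cast [Nat.cast_sub (by omega : 1 ≤ m)]
    simp only [one_mul, add_mul, sub_mul]
    linear_combination (1/2) * two_mul_cos_mul_cos (m * φ) φ
  simp_rw [hexpand]
  rw [intervalIntegral.integral_add, intervalIntegral.integral_add, intervalIntegral.integral_sub,
    intervalIntegral.integral_sub]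
  · rw [intervalIntegral.integral_div, intervalIntegral.integral_div,
      integral_cos_int_mul one_ne_zero, integral_cos_int_mul (by omega),
      integral_cos_int_mul (by omega), integral_cos_int_mul (by omega)]
    simp
  all_goals exact Continuous.intervalIntegrable (by fun_prop) _ _

/-- For every `n ≥ 1`, `∫₀¹ x · f₄^[n](x) / (π·√(x·(1−x))) dx = 1/4`, where `f₄^[n]`
is the `n`-th iterate of the logistic map `f₄(x) = 4·x·(1−x)`: the autocorrelation of
the logistic map at `r = 4` vanishes at every positive lag. -/
theorem logistic_four_autocorrelation_vanishes_all_lags :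
    ∀ n : ℕ, 1 ≤ n →
      ∫ x in Set.Ioo (0 : ℝ) 1,
        x * ((fun y : ℝ => 4 * y * (1 - y))^[n] x) / (π * Real.sqrt (x * (1 - x)))
        = 1 / 4 := by
  intro n hn
  have hm : 2 ≤ 2 ^ n := Nat.le_self_pow (by omega) 2
  simp_rw [div_mul_eq_div_div]
  rw [setIntegral_Ioo_div_sqrt_eq_integral_comp_one_sub_cos (fun x => x * _ / π)]
  simp only [logistic_iterate_one_sub_cos_div_two]
  have horth := integral_one_sub_cos_mul_one_sub_cos hm
  push_cast at horth
  calc ∫ φ in 0..π, (1 - cos φ) / 2 * ((1 - cos (2 ^ n * φ)) / 2) / π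
      = (∫ φ in 0..π, (1 - cos φ) * (1 - cos (2 ^ n * φ))) / (4 * π) := by
        rw [← intervalIntegral.integral_div]
        congr 1 with φ
        ring
    _ = 1 / 4 := by
        rw [horth]
        field_simp
end

section
/- The pushforward of the arcsine measure μ under the map f_4(x) = 4·x·(1−x) equals μ itself; that is, the arcsine distribution on [0,1] is invariant under the logistic map with parameter r = 4. -/
/-!
Substituting `x = sin² (π θ)` turns the logistic map into angle doubling, since
`4 sin² (π θ) cos² (π θ) = sin² (2 π θ)`. So `θ ↦ sin² (π θ)`, read on the circle `ℝ/ℤ`,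
semiconjugates `θ ↦ 2 θ` to `f₄`. It also pushes Haar measure forward to the arcsine law: on
`(0, 1/2)` it is a diffeomorphism onto `(0, 1)` whose inverse `x ↦ arcsin (√x) / π` has
derivative half the arcsine density, and `(1/2, 1)` is the mirror image of `(0, 1/2)`. Since
doubling preserves Haar measure, `f₄` preserves its image.
-/

open Real MeasureTheory

/-- The arcsine measure on `[0,1]`: Lebesgue measure restricted to `[0,1]` with
density `x ↦ 1/(π·√(x·(1−x)))`. -/
noncomputable def arcsineMeasure : Measure ℝ :=
  (volume.restrict (Set.Icc (0 : ℝ) 1)).withDensity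
    (fun x => ENNReal.ofReal (1 / (π * Real.sqrt (x * (1 - x)))))

open Set Function

theorem MeasureTheory.map_withDensity_abs_deriv_eq_restrict_image (μ : Measure ℝ)
    [μ.IsAddHaarMeasure] {s : Set ℝ} {f f' : ℝ → ℝ} (hs : NullMeasurableSet s μ)
    (hf' : ∀ x ∈ s, HasDerivWithinAt f (f' x) s x) (hf : InjOn f s) :
    Measure.map f ((μ.restrict s).withDensity fun x => ENNReal.ofReal |f' x|) =
      μ.restrict (f '' s) := by
  simpa only [ContinuousLinearMap.det_toSpanSingleton] using
    map_withDensity_abs_det_fderiv_eq_addHaar μ hs (fun x hx => (hf' x hx).hasFDerivWithinAt) hf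

theorem MeasureTheory.Measure.restrict_Ioc_eq_restrict_Ioo_add_restrict_Ioo (μ : Measure ℝ)
    [NullSingletonClass μ] {a b c : ℝ} (hab : a ≤ b) (hbc : b ≤ c) :
    μ.restrict (Ioc a c) = μ.restrict (Ioo a b) + μ.restrict (Ioo b c) := by
  rw [← Ioc_union_Ioc_eq_Ioc hab hbc,
    Measure.restrict_union (Ioc_disjoint_Ioc_of_le le_rfl) measurableSet_Ioc,
    Measure.restrict_congr_set Ioo_ae_eq_Ioc, Measure.restrict_congr_set Ioo_ae_eq_Ioc]

namespace Arcsine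

noncomputable def sinSqPi (θ : ℝ) : ℝ := sin (π * θ) ^ 2

noncomputable def arcsinSqrtDivPi (x : ℝ) : ℝ := arcsin (√x) / π

theorem continuous_sinSqPi : Continuous sinSqPi := by
  unfold sinSqPi; fun_prop

theorem periodic_sinSqPi : Periodic sinSqPi 1 := fun θ => by
  simp only [sinSqPi, mul_add, mul_one, sin_add_pi, neg_sq]

theorem sinSqPi_one_sub (θ : ℝ) : sinSqPi (1 - θ) = sinSqPi θ := by
  simp only [sinSqPi, mul_sub, mul_one, sin_pi_sub]

theorem logistic_sinSqPi (θ : ℝ) : 4 * sinSqPi θ * (1 - sinSqPi θ) = sinSqPi (2 * θ) := by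
  simp only [sinSqPi, ← cos_sq', mul_left_comm π 2, sin_two_mul]
  ring

theorem mapsTo_sinSqPi : MapsTo sinSqPi (Ioo 0 (1 / 2)) (Ioo 0 1) := by
  rintro θ ⟨hθ₀, hθ₁⟩
  have hsin₀ : 0 < sin (π * θ) :=
    sin_pos_of_pos_of_lt_pi (mul_pos pi_pos hθ₀) (by nlinarith [pi_pos])
  have hsin₁ : sin (π * θ) < 1 := by
    rw [← sin_pi_div_two]
    exact sin_lt_sin_of_lt_of_le_pi_div_two (by nlinarith [pi_pos]) le_rfl (by nlinarith [pi_pos])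
  exact ⟨pow_pos hsin₀ 2, pow_lt_one₀ hsin₀.le hsin₁ two_ne_zero⟩

theorem mapsTo_arcsinSqrtDivPi : MapsTo arcsinSqrtDivPi (Ioo 0 1) (Ioo 0 (1 / 2)) := by
  rintro x ⟨hx₀, hx₁⟩
  have h₀ : 0 < arcsin √x := arcsin_pos.2 (sqrt_pos.2 hx₀)
  have h₁ : arcsin √x < π / 2 :=
    arcsin_lt_pi_div_two.2 ((sqrt_lt' one_pos).2 (by rwa [one_pow]))
  constructor
  · exact div_pos h₀ pi_pos
  · rw [arcsinSqrtDivPi, div_lt_iff₀ pi_pos]; linarith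

theorem invOn_sinSqPi : InvOn sinSqPi arcsinSqrtDivPi (Ioo 0 1) (Ioo 0 (1 / 2)) := by
  constructor
  · rintro x ⟨hx₀, hx₁⟩
    have hcancel : π * (arcsin √x / π) = arcsin √x := mul_div_cancel₀ _ pi_ne_zero
    rw [sinSqPi, arcsinSqrtDivPi, hcancel, sin_arcsin (by linarith [sqrt_nonneg x])
      (sqrt_le_one.2 hx₁.le), sq_sqrt hx₀.le]
  · rintro θ ⟨hθ₀, hθ₁⟩
    have hsin : 0 ≤ sin (π * θ) :=
      sin_nonneg_of_nonneg_of_le_pi (by nlinarith [pi_pos]) (by nlinarith [pi_pos])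
    rw [sinSqPi, arcsinSqrtDivPi, sqrt_sq hsin, arcsin_sin (by nlinarith [pi_pos])
      (by nlinarith [pi_pos]), mul_div_cancel_left₀ _ pi_ne_zero]

theorem hasDerivAt_arcsinSqrtDivPi {x : ℝ} (hx : x ∈ Ioo (0 : ℝ) 1) :
    HasDerivAt arcsinSqrtDivPi (1 / (π * √(x * (1 - x))) / 2) x := by
  obtain ⟨hx₀, hx₁⟩ := hx
  have hsqrt : HasDerivAt (fun y => √y) (1 / (2 * √x)) x := hasDerivAt_sqrt hx₀.ne'
  have hsqrt_lt_one : √x < 1 := (sqrt_lt' one_pos).2 (by rwa [one_pow])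
  have harcsin :=
    (hasDerivAt_arcsin (by linarith [sqrt_nonneg x]) hsqrt_lt_one.ne).comp x hsqrt
  refine (harcsin.div_const π).congr_deriv ?_
  have hsqrt_pos : 0 < √x := sqrt_pos.2 hx₀
  have hsqrt_one_sub_pos : 0 < √(1 - x) := sqrt_pos.2 (sub_pos.2 hx₁)
  rw [sq_sqrt hx₀.le, sqrt_mul hx₀.le]
  field_simp

theorem measurable_arcsinSqrtDivPi : Measurable arcsinSqrtDivPi :=
  ((continuous_arcsin.comp continuous_sqrt).div_const π).measurable

theorem arcsineMeasure_eq_withDensity_Ioo :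
    arcsineMeasure = (volume.restrict (Ioo 0 1)).withDensity
      fun x => ENNReal.ofReal (1 / (π * √(x * (1 - x)))) := by
  rw [arcsineMeasure, Measure.restrict_congr_set Ioo_ae_eq_Icc]

theorem map_sinSqPi_restrict_Ioo_zero_half :
    Measure.map sinSqPi (volume.restrict (Ioo 0 (1 / 2))) =
      (volume.restrict (Ioo 0 1)).withDensity
        fun x => ENNReal.ofReal (1 / (π * √(x * (1 - x))) / 2) := by
  set ν := (volume.restrict (Ioo (0 : ℝ) 1)).withDensity
    fun x => ENNReal.ofReal (1 / (π * √(x * (1 - x))) / 2)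
  have hbij := invOn_sinSqPi.bijOn mapsTo_arcsinSqrtDivPi mapsTo_sinSqPi
  have hcov : Measure.map arcsinSqrtDivPi ν = volume.restrict (Ioo 0 (1 / 2)) := by
    rw [← hbij.image_eq, ← map_withDensity_abs_deriv_eq_restrict_image volume
      measurableSet_Ioo.nullMeasurableSet
      (fun x hx => (hasDerivAt_arcsinSqrtDivPi hx).hasDerivWithinAt) hbij.injOn]
    have hdens (x : ℝ) : 0 ≤ 1 / (π * √(x * (1 - x))) / 2 := by positivity
    simp only [abs_of_nonneg, hdens, ν]
  have hinv : sinSqPi ∘ arcsinSqrtDivPi =ᵐ[ν] id := by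
    filter_upwards [(withDensity_absolutelyContinuous _ _).ae_le
      (ae_restrict_mem measurableSet_Ioo)] with x hx using invOn_sinSqPi.1 hx
  rw [← hcov, Measure.map_map continuous_sinSqPi.measurable measurable_arcsinSqrtDivPi,
    Measure.map_congr hinv, Measure.map_id]

theorem map_sinSqPi_restrict_Ioo_half_one :
    Measure.map sinSqPi (volume.restrict (Ioo (1 / 2) 1)) =
      Measure.map sinSqPi (volume.restrict (Ioo 0 (1 / 2))) := by
  have hrefl : MeasurePreserving (fun θ : ℝ => 1 - θ)
      (volume.restrict (Ioo (1 / 2) 1)) (volume.restrict (Ioo 0 (1 / 2))) := by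
    have := (Measure.measurePreserving_sub_left volume (1 : ℝ)).restrict_preimage
      (measurableSet_Ioo (a := 0) (b := 1 / 2))
    rwa [preimage_const_sub_Ioo, sub_zero, show (1 : ℝ) - 1 / 2 = 1 / 2 by norm_num] at this
  rw [← hrefl.map_eq, Measure.map_map continuous_sinSqPi.measurable hrefl.measurable]
  congr 1
  funext θ
  exact (sinSqPi_one_sub θ).symm

theorem map_sinSqPi_restrict_Ioc :
    Measure.map sinSqPi (volume.restrict (Ioc 0 1)) = arcsineMeasure := by
  have hsplit := Measure.restrict_Ioc_eq_restrict_Ioo_add_restrict_Ioo volume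
    (show (0 : ℝ) ≤ 1 / 2 by norm_num) (show (1 / 2 : ℝ) ≤ 1 by norm_num)
  rw [hsplit, Measure.map_add _ _ continuous_sinSqPi.measurable, map_sinSqPi_restrict_Ioo_half_one,
    map_sinSqPi_restrict_Ioo_zero_half, ← withDensity_add_left (by fun_prop),
    arcsineMeasure_eq_withDensity_Ioo]
  congr with x
  rw [Pi.add_apply, ← ENNReal.ofReal_add (by positivity) (by positivity), add_halves]

noncomputable def sinSqCircle : AddCircle (1 : ℝ) → ℝ := periodic_sinSqPi.lift

theorem continuous_sinSqCircle : Continuous sinSqCircle :=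
  continuous_quot_lift _ continuous_sinSqPi

theorem measurable_sinSqCircle : Measurable sinSqCircle :=
  continuous_sinSqCircle.measurable

theorem map_sinSqCircle_volume : Measure.map sinSqCircle volume = arcsineMeasure := by
  have hmk := AddCircle.measurePreserving_mk 1 0
  rw [← hmk.map_eq, zero_add, Measure.map_map measurable_sinSqCircle hmk.measurable]
  exact map_sinSqPi_restrict_Ioc

theorem logistic_comp_sinSqCircle :
    (fun x : ℝ => 4 * x * (1 - x)) ∘ sinSqCircle = sinSqCircle ∘ fun θ => 2 • θ := by
  funext θ
  induction θ using QuotientAddGroup.induction_on with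
  | H θ =>
    simp only [comp_apply, ← AddCircle.coe_nsmul, sinSqCircle, Periodic.lift_coe, nsmul_eq_mul,
      Nat.cast_ofNat, logistic_sinSqPi]

end Arcsine

open Arcsine

/-- The arcsine distribution is invariant under the logistic map `f₄(x) = 4·x·(1−x)`:
the pushforward of the arcsine measure under `f₄` equals the arcsine measure. -/
theorem arcsine_invariant_under_logistic_four :
    Measure.map (fun x : ℝ => 4 * x * (1 - x)) arcsineMeasure = arcsineMeasure := by
  have hlogistic : Measurable fun x : ℝ => 4 * x * (1 - x) := by fun_prop
  rw [← map_sinSqCircle_volume, Measure.map_map hlogistic measurable_sinSqCircle,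
    logistic_comp_sinSqCircle, ← Measure.map_map measurable_sinSqCircle (measurable_const_smul 2),
    (AddCircle.ergodic_nsmul one_lt_two).map_eq]
end
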